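/- The two-dimensional Lebesgue measure (area) of the region D equals π/6; consequently the measure with constant density 2π on D has total mass π²/3. -/

import Mathlib

open MeasureTheory Real

/-!
For `x > 0` the vertical section of `D` is `{y | c(x) ≤ |y| ≤ x/2}` with
`c(x) = √(x⁴ - 1)/x`; because `√` truncates negative arguments to `0`, `c` vanishes on `(0, 1]`,
which absorbs the case split `x > 1`. The section has length `ℓ(x) = x - 2c(x)` while this is
nonnegative, i.e. for `x ≤ x₀ = (4/3)^{1/4}`, and is empty beyond. By Tonelli the area is
`∫₀^{x₀} ℓ`: `1/2` over `[0, 1]` plus `π/6 - 1/2` over `[1, x₀]`, the latter from the primitive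
`x²/2 + arctan s - s`, `s = √(x⁴ - 1)`.
-/

/-- The region `D = {(x,y) : x > 0, |y| ≤ x/2, and if x > 1 then y² ≥ x² - x⁻²}`,
parametrizing a fundamental domain for `SL₂(ℝ)/SL₂^±(ℤ)`. -/
def Dset : Set (ℝ × ℝ) :=
  {p | 0 < p.1 ∧ |p.2| ≤ p.1 / 2 ∧ (1 < p.1 → p.1 ^ 2 - (p.1 ^ 2)⁻¹ ≤ p.2 ^ 2)}

open Set Topology

theorem volume_setOf_abs_mem_Icc {a b : ℝ} (ha : 0 ≤ a) :
    volume {y : ℝ | |y| ∈ Icc a b} = ENNReal.ofReal (2 * (b - a)) := by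
  rcases le_or_gt a b with hab | hba
  · have hset : {y : ℝ | |y| ∈ Icc a b} = Icc (-b) b \ Ioo (-a) a := by
      ext y
      simp only [mem_ofPred_eq, mem_Icc, mem_sdiff, mem_Ioo, ← abs_le, ← abs_lt, not_lt]
      tauto
    rw [hset, measure_sdiff (Ioo_subset_Icc_self.trans (Icc_subset_Icc (by linarith) hab))
      measurableSet_Ioo.nullMeasurableSet measure_Ioo_lt_top.ne, volume_Icc, volume_Ioo,
      ← ENNReal.ofReal_sub _ (by linarith)]
    congr 1
    ring
  · have hset : {y : ℝ | |y| ∈ Icc a b} = ∅ := by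
      ext y
      simp only [mem_ofPred_eq, mem_Icc, mem_empty_iff_false, iff_false, not_and, not_le]
      intro h
      linarith
    rw [hset, measure_empty, ENNReal.ofReal_of_nonpos (by linarith)]

noncomputable def lowerEdge (x : ℝ) : ℝ := √(x ^ 4 - 1) / x

theorem lowerEdge_nonneg {x : ℝ} (hx : 0 ≤ x) : 0 ≤ lowerEdge x :=
  div_nonneg (sqrt_nonneg _) hx

theorem lowerEdge_of_abs_le_one {x : ℝ} (hx : |x| ≤ 1) : lowerEdge x = 0 := by
  have : x ^ 4 ≤ 1 :=
    (le_abs_self _).trans ((pow_abs x 4).symm.trans_le (pow_le_one₀ (abs_nonneg x) hx))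
  rw [lowerEdge, sqrt_eq_zero'.2 (by linarith), zero_div]

theorem continuous_lowerEdge : Continuous lowerEdge := by
  refine continuous_iff_continuousAt.2 fun x => ?_
  rcases eq_or_ne x 0 with rfl | hx
  · have hzero : lowerEdge =ᶠ[𝓝 0] fun _ => 0 := by
      filter_upwards [Ioo_mem_nhds (neg_lt_zero.2 one_pos) one_pos] with y hy
      exact lowerEdge_of_abs_le_one (abs_le.2 ⟨hy.1.le, hy.2.le⟩)
    exact continuousAt_const.congr hzero.symm
  · unfold lowerEdge
    fun_prop (disch := exact hx)

theorem lowerEdge_le_iff {x y : ℝ} (hx : 0 < x) :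
    lowerEdge x ≤ |y| ↔ (1 < x → x ^ 2 - (x ^ 2)⁻¹ ≤ y ^ 2) := by
  have hx2 : 0 < x ^ 2 := by positivity
  have hcleared : x ^ 2 - (x ^ 2)⁻¹ = (x ^ 4 - 1) / x ^ 2 := by
    field_simp
  rw [lowerEdge, div_le_iff₀ hx, sqrt_le_left (by positivity), hcleared, div_le_iff₀ hx2,
    mul_pow, sq_abs]
  refine ⟨fun h _ => h, fun h => ?_⟩
  rcases le_or_gt x 1 with hx1 | hx1
  · nlinarith [sq_nonneg y, pow_le_one₀ hx.le hx1 (n := 4)]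
  · exact h hx1

theorem mem_Dset_iff {p : ℝ × ℝ} :
    p ∈ Dset ↔ 0 < p.1 ∧ |p.2| ∈ Icc (lowerEdge p.1) (p.1 / 2) := by
  simp only [Dset, mem_ofPred_eq, mem_Icc]
  constructor
  · rintro ⟨hx, hy, hedge⟩
    exact ⟨hx, (lowerEdge_le_iff hx).2 hedge, hy⟩
  · rintro ⟨hx, hedge, hy⟩
    exact ⟨hx, hy, (lowerEdge_le_iff hx).1 hedge⟩

theorem measurableSet_Dset : MeasurableSet Dset := by
  have : Dset = {p : ℝ × ℝ | 0 < p.1} ∩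
      ({p | lowerEdge p.1 ≤ |p.2|} ∩ {p | |p.2| ≤ p.1 / 2}) := by
    ext p
    exact mem_Dset_iff
  rw [this]
  exact (measurableSet_lt measurable_const measurable_fst).inter
    ((measurableSet_le (continuous_lowerEdge.measurable.comp measurable_fst)
      measurable_snd.abs).inter (measurableSet_le measurable_snd.abs (measurable_fst.div_const 2)))

noncomputable def cornerAbscissa : ℝ := √(2 / √3)

theorem cornerAbscissa_sq : cornerAbscissa ^ 2 = 2 / √3 :=
  sq_sqrt (by positivity)

theorem cornerAbscissa_pow_four : cornerAbscissa ^ 4 = 4 / 3 := by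
  rw [show cornerAbscissa ^ 4 = (cornerAbscissa ^ 2) ^ 2 by ring, cornerAbscissa_sq, div_pow,
    sq_sqrt (by norm_num)]
  norm_num

theorem one_lt_cornerAbscissa : 1 < cornerAbscissa := by
  have : (1 : ℝ) ^ 4 < cornerAbscissa ^ 4 := by
    rw [cornerAbscissa_pow_four]
    norm_num
  exact lt_of_pow_lt_pow_left₀ 4 (sqrt_nonneg _) this

noncomputable def sectionLength (x : ℝ) : ℝ := x - 2 * lowerEdge x

theorem sectionLength_nonneg_iff {x : ℝ} (hx : 0 < x) :
    0 ≤ sectionLength x ↔ x ≤ cornerAbscissa := by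
  rw [← pow_le_pow_iff_left₀ hx.le (zero_le_one.trans one_lt_cornerAbscissa.le) four_ne_zero,
    cornerAbscissa_pow_four, sectionLength, lowerEdge, sub_nonneg, ← le_div_iff₀' two_pos,
    div_le_iff₀ hx, sqrt_le_left (by positivity)]
  constructor <;> intro h <;> nlinarith

theorem volume_preimage_prodMk_Dset (x : ℝ) :
    volume (Prod.mk x ⁻¹' Dset) =
      (Ioc 0 cornerAbscissa).indicator (fun x => ENNReal.ofReal (sectionLength x)) x := by
  by_cases hx : 0 < x
  · have hslice : Prod.mk x ⁻¹' Dset = {y | |y| ∈ Icc (lowerEdge x) (x / 2)} := by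
      ext y
      simp [mem_Dset_iff, hx]
    rw [hslice, volume_setOf_abs_mem_Icc (lowerEdge_nonneg hx.le),
      show 2 * (x / 2 - lowerEdge x) = sectionLength x by rw [sectionLength]; ring]
    by_cases hxa : x ≤ cornerAbscissa
    · rw [indicator_of_mem (show x ∈ Ioc 0 cornerAbscissa from ⟨hx, hxa⟩)]
    · rw [indicator_of_notMem fun h => hxa h.2, ENNReal.ofReal_eq_zero]
      exact le_of_not_ge ((sectionLength_nonneg_iff hx).not.2 hxa)
  · have hslice : Prod.mk x ⁻¹' Dset = ∅ := by
      ext y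
      simp [mem_Dset_iff, hx]
    rw [hslice, measure_empty, indicator_of_notMem fun h => hx h.1]

theorem continuous_sectionLength : Continuous sectionLength :=
  continuous_id.sub (continuous_const.mul continuous_lowerEdge)

theorem integral_sectionLength_zero_one : ∫ x in (0 : ℝ)..1, sectionLength x = 1 / 2 := by
  have hid : EqOn sectionLength id (uIcc 0 1) := fun x hx => by
    rw [uIcc_of_le zero_le_one] at hx
    simp [sectionLength, lowerEdge_of_abs_le_one (abs_le.2 ⟨by linarith [hx.1], hx.2⟩)]
  rw [intervalIntegral.integral_congr hid]
  norm_num [integral_id]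

noncomputable def sectionLengthPrimitive (x : ℝ) : ℝ :=
  x ^ 2 / 2 + arctan √(x ^ 4 - 1) - √(x ^ 4 - 1)

theorem hasDerivAt_sectionLengthPrimitive {x : ℝ} (hx : 1 < x) :
    HasDerivAt sectionLengthPrimitive (sectionLength x) x := by
  have hx4 : 0 < x ^ 4 - 1 := by nlinarith [one_lt_pow₀ hx four_ne_zero]
  have hs_pos : 0 < √(x ^ 4 - 1) := sqrt_pos.2 hx4
  have hs_sq : √(x ^ 4 - 1) ^ 2 = x ^ 4 - 1 := sq_sqrt hx4.le
  have hroot : HasDerivAt (fun y => √(y ^ 4 - 1)) (4 * x ^ 3 / (2 * √(x ^ 4 - 1))) x := by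
    simpa using ((hasDerivAt_pow 4 x).sub_const 1).sqrt hx4.ne'
  have hsum : HasDerivAt sectionLengthPrimitive _ x :=
    (((hasDerivAt_pow 2 x).div_const 2).add hroot.arctan).sub hroot
  refine hsum.congr_deriv ?_
  rw [sectionLength, lowerEdge]
  field_simp
  rw [hs_sq]
  push_cast
  linear_combination 4 * x ^ 4 * hs_sq

theorem sectionLengthPrimitive_one : sectionLengthPrimitive 1 = 1 / 2 := by
  norm_num [sectionLengthPrimitive]

theorem sectionLengthPrimitive_cornerAbscissa : sectionLengthPrimitive cornerAbscissa = π / 6 := by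
  have hroot : √(cornerAbscissa ^ 4 - 1) = 1 / √3 := by
    rw [cornerAbscissa_pow_four, show (4 / 3 - 1 : ℝ) = (3)⁻¹ by norm_num, sqrt_inv, one_div]
  have harctan : arctan (1 / √3) = π / 6 := by
    rw [← tan_pi_div_six, arctan_tan] <;> linarith [pi_pos]
  rw [sectionLengthPrimitive, hroot, harctan, cornerAbscissa_sq]
  ring

theorem continuous_sectionLengthPrimitive : Continuous sectionLengthPrimitive := by
  unfold sectionLengthPrimitive
  fun_prop

theorem integral_sectionLength_one_cornerAbscissa :
    ∫ x in (1 : ℝ)..cornerAbscissa, sectionLength x = π / 6 - 1 / 2 := by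
  rw [intervalIntegral.integral_eq_sub_of_hasDeriv_right_of_le one_lt_cornerAbscissa.le
    continuous_sectionLengthPrimitive.continuousOn
    (fun x hx => (hasDerivAt_sectionLengthPrimitive hx.1).hasDerivWithinAt)
    (continuous_sectionLength.intervalIntegrable _ _),
    sectionLengthPrimitive_one, sectionLengthPrimitive_cornerAbscissa]

theorem integral_sectionLength : ∫ x in (0 : ℝ)..cornerAbscissa, sectionLength x = π / 6 := by
  rw [← intervalIntegral.integral_add_adjacent_intervals
    (continuous_sectionLength.intervalIntegrable 0 1)
    (continuous_sectionLength.intervalIntegrable 1 _),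
    integral_sectionLength_zero_one, integral_sectionLength_one_cornerAbscissa]
  ring

theorem volume_Dset : volume Dset = ENNReal.ofReal (π / 6) := by
  rw [Measure.volume_eq_prod, Measure.prod_apply measurableSet_Dset]
  simp_rw [volume_preimage_prodMk_Dset]
  rw [lintegral_indicator measurableSet_Ioc, ← ofReal_integral_eq_lintegral_ofReal
    continuous_sectionLength.integrableOn_Ioc
    ((ae_restrict_iff' measurableSet_Ioc).2 (ae_of_all _ fun x hx =>
      (sectionLength_nonneg_iff hx.1).2 hx.2)),
    ← intervalIntegral.integral_of_le (zero_le_one.trans one_lt_cornerAbscissa.le),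
    integral_sectionLength]

theorem stmt14 :
    volume Dset = ENNReal.ofReal (π / 6) ∧
      2 * π * (volume Dset).toReal = π ^ 2 / 3 := by
  refine ⟨volume_Dset, ?_⟩
  rw [volume_Dset, ENNReal.toReal_ofReal (by positivity)]
  ring
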